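/- arXiv:2107.13681 — 7 statements merged into one kernel-verified Lean document; each statement's English description precedes it below -/
import Mathlib

section
/- For any CRN, if state d is segment-reachable from state c, then d is (m+1)-segment reachable from c, where m is the minimum of the number of reactions |R| and the number of species |Λ|. -/
open Finset Filter Topology

/-- A chemical reaction network (CRN): a finite set of species indexed by `Fin nS`
and a finite set of reactions indexed by `Fin nR`.  Each reaction `α` is a pair
`(react α, prods α) ∈ ℕ^Λ × ℕ^Λ` of reactant/product stoichiometries with
nonzero reactant vector. -/
structure CRN where
  nS : ℕ
  nR : ℕ
  react : Fin nR → Fin nS → ℕ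
  prods : Fin nR → Fin nS → ℕ
  react_ne_zero : ∀ α, react α ≠ 0

namespace CRN

variable (N : CRN)

/-- The stoichiometry matrix: `M(S,α) = p(S) − r(S)`. -/
def stoich (s : Fin N.nS) (α : Fin N.nR) : ℝ :=
  (N.prods α s : ℝ) - (N.react α s : ℝ)

/-- A state is a vector of nonnegative concentrations. -/
def IsState (c : Fin N.nS → ℝ) : Prop := ∀ s, 0 ≤ c s

/-- `[c]`: the set of species present in `c`. -/
def present (c : Fin N.nS → ℝ) : Set (Fin N.nS) := {s | 0 < c s}

/-- A reaction `α` is applicable at `c` if `[react α] ⊆ [c]`. -/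
def applicable (c : Fin N.nS → ℝ) (α : Fin N.nR) : Prop :=
  ∀ s, 0 < N.react α s → 0 < c s

/-- `c →¹ d`: `d` is straight-line reachable from `c`, i.e. `d = c + M u` for some
nonnegative flux vector `u` whose positive entries correspond to reactions
applicable at `c`. -/
def slReach (c d : Fin N.nS → ℝ) : Prop :=
  N.IsState c ∧ N.IsState d ∧
  ∃ u : Fin N.nR → ℝ, (∀ α, 0 ≤ u α) ∧
    (∀ α, 0 < u α → N.applicable c α) ∧
    ∀ s, d s = c s + ∑ α, u α * N.stoich s α

/-- `c ⇝^l d`: `d` is `l`-segment reachable from `c`. -/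
def segReachN (l : ℕ) (c d : Fin N.nS → ℝ) : Prop :=
  ∃ b : Fin (l + 1) → Fin N.nS → ℝ,
    b 0 = c ∧ b (Fin.last l) = d ∧
    ∀ i : Fin l, N.slReach (b i.castSucc) (b i.succ)

/-- `c ⇝ d`: `d` is segment-reachable from `c`. -/
def segReach (c d : Fin N.nS → ℝ) : Prop := ∃ l, N.segReachN l c d

/-- `P(c)`: the set of species present in some state segment-reachable from `c`. -/
def producible (c : Fin N.nS → ℝ) : Set (Fin N.nS) :=
  {s | ∃ d, N.segReach c d ∧ 0 < d s}

/-- A siphon: every reaction producing a species of `Ω` has a reactant in `Ω`. -/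
def IsSiphon (Ω : Set (Fin N.nS)) : Prop :=
  ∀ α, (∃ s ∈ Ω, 0 < N.prods α s) → ∃ s ∈ Ω, 0 < N.react α s

end CRN

namespace CRN

variable (N : CRN)

/-- ℕ-indexed version of `segReachN`. -/
def nseg (m : ℕ) (c d : Fin N.nS → ℝ) : Prop :=
  ∃ y : ℕ → Fin N.nS → ℝ, y 0 = c ∧ y m = d ∧ ∀ j < m, N.slReach (y j) (y (j+1))

variable {N}

lemma slReach_refl {d : Fin N.nS → ℝ} (hd : N.IsState d) : N.slReach d d := by
  refine ⟨hd, hd, fun _ => 0, fun α => le_refl 0, fun α h => absurd h (lt_irrefl 0), fun s => by simp⟩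

lemma nseg_iff {m : ℕ} {c d : Fin N.nS → ℝ} : N.nseg m c d ↔ N.segReachN m c d := by
  constructor
  · rintro ⟨y, h0, hm, hseg⟩
    refine ⟨fun i => y i, by simpa using h0, by simpa using hm, fun i => ?_⟩
    simpa [Fin.castSucc, Fin.succ] using hseg i i.isLt
  · rintro ⟨b, h0, hm, hseg⟩
    refine ⟨fun j => if hj : j < m + 1 then b ⟨j, hj⟩ else d, by simpa using h0, ?_, ?_⟩
    · simp only [dif_pos (Nat.lt_succ_self m)]
      simpa [Fin.last] using hm
    · intro j hj
      have h1 : j < m + 1 := by omega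
      have h2 : j + 1 < m + 1 := by omega
      simp only [dif_pos h1, dif_pos h2]
      have := hseg ⟨j, hj⟩
      convert this using 2 <;> rfl

lemma nseg_mono {m k : ℕ} {c d : Fin N.nS → ℝ} (hd : N.IsState d) (h : N.nseg m c d)
    (hmk : m ≤ k) : N.nseg k c d := by
  induction k, hmk using Nat.le_induction with
  | base => exact h
  | succ k hk ih =>
    obtain ⟨y, h0, hm, hseg⟩ := ih
    refine ⟨fun j => if j ≤ k then y j else d, by simpa using h0, by simp, ?_⟩
    intro j hj
    rcases Nat.lt_or_ge j k with hjk | hjk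
    · have : j + 1 ≤ k := hjk
      simpa [Nat.le_of_lt hjk, this] using hseg j hjk
    · have hjk : j = k := by omega
      subst hjk
      simp only [le_refl, if_pos, if_neg (by omega : ¬ j + 1 ≤ j), hm]
      exact slReach_refl hd

open Classical in
lemma compress (U : Finset (Fin N.nR)) (m : ℕ) :
    ∀ (y : ℕ → Fin N.nS → ℝ) (v : ℕ → Fin N.nR → ℝ),
    (∀ j ≤ m, N.IsState (y j)) →
    (∀ j < m, ∀ α, 0 ≤ v j α) →
    (∀ j < m, ∀ α, 0 < v j α → N.applicable (y j) α) →
    (∀ j < m, ∀ s, y (j+1) s = y j s + ∑ α, v j α * N.stoich s α) →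
    (∀ j < m, ∀ α, 0 < v j α → α ∈ U) →
    (∀ i j, i ≤ j → j + 1 ≤ m → N.present (y i) ⊆ N.present (y j)) →
    ∃ m' ≤ min N.nR N.nS + 1, N.nseg m' (y 0) (y m) := by
  induction m using Nat.strong_induction_on with
  | _ m IH =>
  intro y v H1 H2 H3 H4 H5 H6
  rcases le_or_gt m (min N.nR N.nS + 1) with hm | hm
  · -- already short enough
    refine ⟨m, hm, y, rfl, rfl, fun j hj => ?_⟩
    exact ⟨H1 j (by omega), H1 (j+1) (by omega), v j, H2 j hj, H3 j hj, H4 j hj⟩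
  · -- m too long: find a mergeable pair
    set A : ℕ → Finset (Fin N.nR) := fun j => U.filter (fun α => N.applicable (y j) α) with hA
    set P : ℕ → Finset (Fin N.nS) := fun j => Finset.univ.filter (fun s => 0 < y j s) with hP
    have hPmono : ∀ j, j + 2 ≤ m → P j ⊆ P (j+1) := by
      intro j hj s hs
      simp only [hP, Finset.mem_filter, Finset.mem_univ, true_and] at hs ⊢
      exact H6 j (j+1) (by omega) (by omega) hs
    have hAmono : ∀ j, j + 2 ≤ m → A j ⊆ A (j+1) := by
      intro j hj α hα
      simp only [hA, Finset.mem_filter] at hα ⊢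
      refine ⟨hα.1, fun s hs => ?_⟩
      exact H6 j (j+1) (by omega) (by omega) (hα.2 s hs)
    have hPA : ∀ j, P j = P (j+1) → A j = A (j+1) := by
      intro j hPj
      have key : ∀ s, (0 < y j s) ↔ (0 < y (j+1) s) := by
        intro s
        have := Finset.ext_iff.mp hPj s
        simpa [hP, Finset.mem_filter] using this
      ext α
      simp only [hA, Finset.mem_filter]
      simp only [applicable]
      constructor
      · rintro ⟨h1, h2⟩; exact ⟨h1, fun s hs => (key s).mp (h2 s hs)⟩
      · rintro ⟨h1, h2⟩; exact ⟨h1, fun s hs => (key s).mpr (h2 s hs)⟩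
    have hex : ∃ j, j + 2 ≤ m ∧ A j = A (j+1) := by
      by_contra hcon
      push_neg at hcon
      have key : ∀ j, j + 1 ≤ m → j ≤ (A j).card ∧ j ≤ (P j).card := by
        intro j
        induction j with
        | zero => intro _; exact ⟨Nat.zero_le _, Nat.zero_le _⟩
        | succ j ih =>
          intro hj
          obtain ⟨hAj, hPj⟩ := ih (by omega)
          have hAne := hcon j (by omega)
          have hPne : P j ≠ P (j+1) := fun hpe => hAne (hPA j hpe)
          have h1 : (A j).card < (A (j+1)).card :=
            Finset.card_lt_card (lt_of_le_of_ne (hAmono j (by omega)) hAne)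
          have h2 : (P j).card < (P (j+1)).card :=
            Finset.card_lt_card (lt_of_le_of_ne (hPmono j (by omega)) hPne)
          exact ⟨by omega, by omega⟩
      obtain ⟨hAc, hPc⟩ := key (m-1) (by omega)
      have h1 : (A (m-1)).card ≤ N.nR := by
        have hsub : A (m-1) ⊆ U := fun α hα => (Finset.mem_filter.mp hα).1
        have := le_trans (Finset.card_le_card hsub) (Finset.card_le_univ U)
        simpa using this
      have h2 : (P (m-1)).card ≤ N.nS := by
        simpa using Finset.card_le_univ (P (m-1))
      omega
    obtain ⟨j, hj, hAj⟩ := hex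
    -- merge segments j and j+1
    set y' : ℕ → Fin N.nS → ℝ := fun i => if i ≤ j then y i else y (i+1) with hy'
    set v' : ℕ → Fin N.nR → ℝ := fun i =>
      if i < j then v i else if i = j then (fun α => v j α + v (j+1) α) else v (i+1) with hv'
    have hy'le : ∀ i, i ≤ j → y' i = y i := fun i hi => by simp [hy', hi]
    have hy'gt : ∀ i, j < i → y' i = y (i+1) := fun i hi => by simp [hy', Nat.not_le.mpr hi]
    have hv'lt : ∀ i, i < j → v' i = v i := fun i hi => by simp [hv', hi]
    have hv'eq : ∀ α, v' j α = v j α + v (j+1) α := fun α => by simp [hv']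
    have hv'gt : ∀ i, j < i → v' i = v (i+1) := fun i hi => by
      simp only [hv']
      rw [if_neg (by omega : ¬ i < j), if_neg (by omega : ¬ i = j)]
    have hKey : ∃ m' ≤ min N.nR N.nS + 1, N.nseg m' (y' 0) (y' (m-1)) := by
      apply IH (m-1) (by omega) y' v'
      · intro i hi
        rcases le_or_gt i j with h | h
        · rw [hy'le i h]; exact H1 i (by omega)
        · rw [hy'gt i h]; exact H1 (i+1) (by omega)
      · intro i hi α
        rcases Nat.lt_trichotomy i j with h | h | h
        · simp only [hv', if_pos h]; exact H2 i (by omega) α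
        · subst h
          rw [hv'eq]
          exact add_nonneg (H2 i (by omega) α) (H2 (i+1) (by omega) α)
        · rw [hv'gt i h]
          exact H2 (i+1) (by omega) α
      · intro i hi α hα
        rcases Nat.lt_trichotomy i j with h | h | h
        · rw [hy'le i (by omega)]
          rw [hv'lt i h] at hα
          exact H3 i (by omega) α hα
        · subst h
          rw [hy'le i le_rfl]
          rw [hv'eq] at hα
          rcases lt_or_ge 0 (v i α) with hpos | hle
          · exact H3 i (by omega) α hpos
          · have hpos : 0 < v (i+1) α := by linarith
            have hmem : α ∈ A (i+1) := by
              simp only [hA, Finset.mem_filter]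
              exact ⟨H5 (i+1) (by omega) α hpos, H3 (i+1) (by omega) α hpos⟩
            have : α ∈ A i := hAj ▸ hmem
            simp only [hA, Finset.mem_filter] at this
            exact this.2
        · rw [hy'gt i h]
          rw [hv'gt i h] at hα
          exact H3 (i+1) (by omega) α hα
      · intro i hi s
        rcases Nat.lt_trichotomy i j with h | h | h
        · rw [hy'le i (by omega), hy'le (i+1) (by omega), hv'lt i h]
          exact H4 i (by omega) s
        · subst h
          rw [hy'le i le_rfl, hy'gt (i+1) (by omega)]
          have e1 := H4 i (by omega) s
          have e2 := H4 (i+1) (by omega) s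
          rw [e2, e1, add_assoc]
          congr 1
          rw [← Finset.sum_add_distrib]
          exact Finset.sum_congr rfl (fun α _ => by rw [hv'eq]; ring)
        · rw [hy'gt i h, hy'gt (i+1) (by omega), hv'gt i h]
          exact H4 (i+1) (by omega) s
      · intro i hi α hα
        rcases Nat.lt_trichotomy i j with h | h | h
        · rw [hv'lt i h] at hα
          exact H5 i (by omega) α hα
        · subst h
          rw [hv'eq] at hα
          rcases lt_or_ge 0 (v i α) with hpos | hle
          · exact H5 i (by omega) α hpos
          · have hpos : 0 < v (i+1) α := by linarith
            exact H5 (i+1) (by omega) α hpos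
        · rw [hv'gt i h] at hα
          exact H5 (i+1) (by omega) α hα
      · intro i k hik hk
        rcases le_or_gt k j with h | h
        · rw [hy'le i (le_trans hik h), hy'le k h]
          exact H6 i k hik (by omega)
        · rw [hy'gt k h]
          rcases le_or_gt i j with h2 | h2
          · rw [hy'le i h2]
            exact H6 i (k+1) (by omega) (by omega)
          · rw [hy'gt i h2]
            exact H6 (i+1) (k+1) (by omega) (by omega)
    obtain ⟨m', hm', hn⟩ := hKey
    have e0 : y' 0 = y 0 := hy'le 0 (Nat.zero_le _)
    have e1 : y' (m-1) = y m := by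
      rw [hy'gt (m-1) (by omega), (by omega : m - 1 + 1 = m)]
    exact ⟨m', hm', e0 ▸ e1 ▸ hn⟩

lemma exists_nseg_small {l : ℕ} {c d : Fin N.nS → ℝ} (hc : N.IsState c) (hd : N.IsState d)
    (h : N.segReachN l c d) : ∃ m' ≤ min N.nR N.nS + 1, N.nseg m' c d := by
  classical
  obtain ⟨b, hb0, hbl, hbseg⟩ := h
  set B : ℕ → Fin N.nS → ℝ := fun k => if hk : k < l + 1 then b ⟨k, hk⟩ else d with hB
  have hB0 : B 0 = c := by
    simp only [hB, dif_pos (Nat.succ_pos l)]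
    exact hb0
  have hBl : B l = d := by
    simp only [hB, dif_pos (Nat.lt_succ_self l)]
    exact hbl
  have hBseg : ∀ k, k < l → N.slReach (B k) (B (k+1)) := by
    intro k hk
    have h1 : k < l + 1 := by omega
    have h2 : k + 1 < l + 1 := by omega
    simp only [hB, dif_pos h1, dif_pos h2]
    have := hbseg ⟨k, hk⟩
    convert this using 2 <;> rfl
  have hBstate : ∀ k, N.IsState (B k) := by
    intro k
    by_cases hk : k < l
    · exact (hBseg k hk).1
    · by_cases hk2 : k < l + 1
      · have hkl : k = l := by omega
        subst hkl; rw [hBl]; exact hd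
      · simp only [hB, dif_neg hk2]; exact hd
  have hspec : ∀ k, ∃ w : Fin N.nR → ℝ, k < l →
      (∀ α, 0 ≤ w α) ∧ (∀ α, 0 < w α → N.applicable (B k) α) ∧
      (∀ s, B (k+1) s = B k s + ∑ α, w α * N.stoich s α) := by
    intro k
    by_cases hk : k < l
    · obtain ⟨_, _, w, h1, h2, h3⟩ := hBseg k hk
      exact ⟨w, fun _ => ⟨h1, h2, h3⟩⟩
    · exact ⟨fun _ => 0, fun hkk => absurd hkk hk⟩
  choose u hu using hspec
  set g : ℕ → Fin N.nS → ℝ := fun t s => ∑ α, u t α * N.stoich s α with hg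
  have hLB : ∀ k, k ≤ l → ∀ s, B k s = c s + ∑ t ∈ Finset.range k, g t s := by
    intro k
    induction k with
    | zero => intro _ s; simp [hB0]
    | succ k ih =>
      intro hk s
      have e := (hu k (by omega)).2.2 s
      rw [e, ih (by omega) s, Finset.sum_range_succ]
      simp only [hg]
      ring
  set y : ℕ → Fin N.nS → ℝ := fun j =>
    if j ≤ l then (fun s => ((j:ℝ)+1)⁻¹ * ∑ k ∈ Finset.range (j+1), B k s) else d with hy
  set v : ℕ → Fin N.nR → ℝ := fun j α =>
    if j < l then ∑ t ∈ Finset.range (j+1), (((t:ℝ)+1)/((((j:ℝ)+1))*(((j:ℝ))+2))) * u t α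
    else ∑ t ∈ Finset.range l, (((t:ℝ)+1)/(((l:ℝ))+1)) * u t α with hv
  have hy0 : y 0 = c := by
    funext s
    simp [hy, Finset.sum_range_one, hB0]
  have hyend : y (l+1) = d := by
    simp [hy]
  have hystate : ∀ j, j ≤ l → N.IsState (y j) := by
    intro j hj s
    simp only [hy, if_pos hj]
    exact mul_nonneg (by positivity) (Finset.sum_nonneg fun k _ => hBstate k s)
  have hypos : ∀ j, j ≤ l → ∀ s, (0 < y j s ↔ ∃ k, k ≤ j ∧ 0 < B k s) := by
    intro j hj s
    simp only [hy, if_pos hj]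
    constructor
    · intro hpos
      by_contra hcon
      push_neg at hcon
      have hz : ∑ k ∈ Finset.range (j+1), B k s = 0 :=
        Finset.sum_eq_zero fun k hk =>
          le_antisymm (hcon k (by simp only [Finset.mem_range] at hk; omega)) (hBstate k s)
      rw [hz, mul_zero] at hpos
      exact lt_irrefl 0 hpos
    · rintro ⟨k, hk, hbk⟩
      apply mul_pos (by positivity)
      have hle := Finset.single_le_sum (f := fun i => B i s) (fun i _ => hBstate i s)
        (Finset.mem_range.mpr (by omega : k < j + 1))
      linarith
  have hvpos : ∀ j α, 0 < v j α → ∃ t, t < l ∧ t ≤ j ∧ 0 < u t α := by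
    intro j α hpos
    by_cases hjl : j < l
    · simp only [hv, if_pos hjl] at hpos
      by_contra hcon
      push_neg at hcon
      have hz : ∀ t ∈ Finset.range (j+1), (((t:ℝ)+1)/((((j:ℝ)+1))*(((j:ℝ))+2))) * u t α = 0 := by
        intro t ht
        simp only [Finset.mem_range] at ht
        have htl : t < l := by omega
        have h1 : u t α ≤ 0 := hcon t htl (by omega)
        have h2 := (hu t htl).1 α
        rw [le_antisymm h1 h2, mul_zero]
      rw [Finset.sum_eq_zero hz] at hpos
      exact lt_irrefl 0 hpos
    · simp only [hv, if_neg hjl] at hpos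
      by_contra hcon
      push_neg at hcon
      have hz : ∀ t ∈ Finset.range l, (((t:ℝ)+1)/(((l:ℝ))+1)) * u t α = 0 := by
        intro t ht
        simp only [Finset.mem_range] at ht
        have h1 : u t α ≤ 0 := hcon t ht (by omega)
        have h2 := (hu t ht).1 α
        rw [le_antisymm h1 h2, mul_zero]
      rw [Finset.sum_eq_zero hz] at hpos
      exact lt_irrefl 0 hpos
  have hvnonneg : ∀ j α, 0 ≤ v j α := by
    intro j α
    by_cases hjl : j < l
    · simp only [hv, if_pos hjl]
      refine Finset.sum_nonneg fun t ht => mul_nonneg (by positivity) ?_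
      simp only [Finset.mem_range] at ht
      exact (hu t (by omega)).1 α
    · simp only [hv, if_neg hjl]
      refine Finset.sum_nonneg fun t ht => mul_nonneg (by positivity) ?_
      simp only [Finset.mem_range] at ht
      exact (hu t ht).1 α
  have happ : ∀ j, j ≤ l → ∀ α, 0 < v j α → N.applicable (y j) α := by
    intro j hj α hpos
    obtain ⟨t, htl, htj, hupos⟩ := hvpos j α hpos
    intro s hs
    exact (hypos j hj s).mpr ⟨t, htj, (hu t htl).2.1 α hupos s hs⟩
  set U : Finset (Fin N.nR) := Finset.univ.filter (fun α => ∃ t, t < l ∧ 0 < u t α) with hU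
  have hUmem : ∀ j α, 0 < v j α → α ∈ U := by
    intro j α hpos
    obtain ⟨t, htl, _, hupos⟩ := hvpos j α hpos
    simp only [hU, Finset.mem_filter, Finset.mem_univ, true_and]
    exact ⟨t, htl, hupos⟩
  have hpres : ∀ i j, i ≤ j → j + 1 ≤ l + 1 → N.present (y i) ⊆ N.present (y j) := by
    intro i j hij hjl s hs
    have h0 : 0 < y i s := hs
    obtain ⟨k, hk, hbk⟩ := (hypos i (by omega) s).mp h0
    exact (hypos j (by omega) s).mpr ⟨k, by omega, hbk⟩
  have hDsum : ∀ (J : ℕ) (s : Fin N.nS), ∑ k ∈ Finset.range (J+1), ∑ t ∈ Finset.range k, g t s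
      = ∑ t ∈ Finset.range J, ((J:ℝ) - t) * g t s := by
    intro J s
    induction J with
    | zero => simp
    | succ J ih =>
      rw [Finset.sum_range_succ, ih]
      have hcong : ∀ t ∈ Finset.range (J+1), (((J:ℕ):ℝ) + 1 - (t:ℝ)) * g t s
          = ((J:ℝ) - t) * g t s + g t s := by
        intro t ht; ring
      calc ∑ t ∈ Finset.range J, ((J:ℝ) - t) * g t s + ∑ t ∈ Finset.range (J+1), g t s
          = ∑ t ∈ Finset.range (J+1), ((J:ℝ) - t) * g t s + ∑ t ∈ Finset.range (J+1), g t s := by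
            rw [Finset.sum_range_succ (f := fun t : ℕ => ((J:ℝ) - (t:ℝ)) * g t s), sub_self,
              zero_mul, add_zero]
        _ = ∑ t ∈ Finset.range (J+1), (((J:ℕ):ℝ) + 1 - (t:ℝ)) * g t s := by
            rw [← Finset.sum_add_distrib]
            exact (Finset.sum_congr rfl hcong).symm
        _ = ∑ t ∈ Finset.range (J+1), (((J+1:ℕ):ℝ) - (t:ℝ)) * g t s := by
            refine Finset.sum_congr rfl fun t ht => ?_
            push_cast; ring
  have hyform : ∀ j, j ≤ l → ∀ s, y j s = c s + ∑ t ∈ Finset.range j, (((j:ℝ) - t)/((j:ℝ)+1)) * g t s := by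
    intro j hj s
    have hj1 : ((j:ℝ) + 1) ≠ 0 := by positivity
    simp only [hy, if_pos hj]
    rw [Finset.sum_congr rfl (fun k hk => hLB k (by simp only [Finset.mem_range] at hk; omega) s)]
    rw [Finset.sum_add_distrib, Finset.sum_const, Finset.card_range, hDsum j s, mul_add]
    congr 1
    · rw [nsmul_eq_mul]
      push_cast
      field_simp
    · rw [Finset.mul_sum]
      exact Finset.sum_congr rfl fun t ht => by ring
  have hswap : ∀ (T : Finset ℕ) (w : ℕ → ℝ) (s : Fin N.nS),
      ∑ α, (∑ t ∈ T, w t * u t α) * N.stoich s α = ∑ t ∈ T, w t * g t s := by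
    intro T w s
    simp_rw [Finset.sum_mul]
    rw [Finset.sum_comm]
    refine Finset.sum_congr rfl fun t _ => ?_
    simp only [hg]
    rw [Finset.mul_sum]
    exact Finset.sum_congr rfl fun α _ => (mul_assoc _ _ _)
  have heq : ∀ j, j < l + 1 → ∀ s, y (j+1) s = y j s + ∑ α, v j α * N.stoich s α := by
    intro j hj s
    by_cases hjl : j < l
    · have hj1 : ((j:ℝ)+1) ≠ 0 := by positivity
      have hj2 : ((j:ℝ)+2) ≠ 0 := by positivity
      simp only [hv, if_pos hjl]
      rw [hswap (Finset.range (j+1)) (fun t => (((t:ℝ)+1)/((((j:ℝ)+1))*(((j:ℝ))+2)))) s]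
      rw [hyform (j+1) (by omega) s, hyform j (by omega) s]
      have ext : ∑ t ∈ Finset.range j, (((j:ℝ) - t)/((j:ℝ)+1)) * g t s
          = ∑ t ∈ Finset.range (j+1), (((j:ℝ) - t)/((j:ℝ)+1)) * g t s := by
        rw [Finset.sum_range_succ, sub_self, zero_div, zero_mul, add_zero]
      rw [ext, add_assoc, ← Finset.sum_add_distrib]
      congr 1
      refine Finset.sum_congr rfl fun t ht => ?_
      rw [← add_mul]
      have hco : (((j+1:ℕ):ℝ) - (t:ℝ))/(((j+1:ℕ):ℝ)+1)
          = ((j:ℝ) - t)/((j:ℝ)+1) + ((t:ℝ)+1)/((((j:ℝ)+1))*(((j:ℝ))+2)) := by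
        push_cast
        field_simp
        ring
      rw [hco]
    · have hjl' : j = l := by omega
      subst hjl'
      have hj1 : ((j:ℝ)+1) ≠ 0 := by positivity
      simp only [hv, if_neg (lt_irrefl j)]
      rw [hswap (Finset.range j) (fun t => (((t:ℝ)+1)/((j:ℝ)+1))) s]
      rw [hyform j le_rfl s]
      have hy1 : y (j+1) = d := hyend
      rw [hy1, ← hBl, hLB j le_rfl s, add_assoc, ← Finset.sum_add_distrib]
      congr 1
      refine Finset.sum_congr rfl fun t ht => ?_
      rw [← add_mul]
      have hco : (1:ℝ) = ((j:ℝ) - t)/((j:ℝ)+1) + ((t:ℝ)+1)/((j:ℝ)+1) := by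
        field_simp
        ring
      rw [← hco, one_mul]
  have := compress U (l+1) y v
    (by
      intro j hj
      rcases Nat.lt_or_ge j (l+1) with h' | h'
      · exact hystate j (by omega)
      · have : j = l + 1 := by omega
        rw [this, hyend]; exact hd)
    (fun j _ α => hvnonneg j α)
    (fun j hj α hα => happ j (by omega) α hα)
    (fun j hj s => heq j hj s)
    (fun j _ α hα => hUmem j α hα)
    hpres
  rw [hy0, hyend] at this
  exact this

end CRN

/-- If state `d` is segment-reachable from state `c`, then `d` is
`(m+1)`-segment reachable from `c`, where `m = min |R| |Λ|`. -/
theorem segReach_implies_segReachN_succ_min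
    (N : CRN) (c d : Fin N.nS → ℝ) (hc : N.IsState c) (hd : N.IsState d)
    (h : N.segReach c d) :
    N.segReachN (min N.nR N.nS + 1) c d := by
  obtain ⟨l, hl⟩ := h
  obtain ⟨m', hm', hn⟩ := CRN.exists_nseg_small hc hd hl
  exact CRN.nseg_iff.mp (CRN.nseg_mono hd hn hm')
end

section
/- For any CRN, let k ∈ ℕ and let c, d_1, …, d_l be states such that c ⇝^k d_i for each i ∈ {1,…,l}. Then there exists a state d with c ⇝^k d and [d] = ∪_{i=1}^l [d_i]. -/
open Finset Filter Topology

/-- If `c ⇝^k dᵢ` for states `d₁, …, d_l`, then there is a state `d` with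
`c ⇝^k d` and `[d] = ⋃ᵢ [dᵢ]`. -/
theorem exists_segReachN_present_eq_iUnion
    (N : CRN) (k l : ℕ) (hl : 0 < l)
    (c : Fin N.nS → ℝ) (hc : N.IsState c)
    (ds : Fin l → Fin N.nS → ℝ) (hds : ∀ i, N.IsState (ds i))
    (hreach : ∀ i, N.segReachN k c (ds i)) :
    ∃ d : Fin N.nS → ℝ, N.segReachN k c d ∧
      N.present d = ⋃ i, N.present (ds i) := by
  have hlpos : (0:ℝ) < (l:ℝ) := by exact_mod_cast hl
  have hinv : (0:ℝ) < (l:ℝ)⁻¹ := inv_pos.mpr hlpos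
  choose B hB0 hBlast hBstep using hreach
  have hBnn : ∀ i j, N.IsState (B i j) := by
    intro i j
    rcases Fin.eq_zero_or_eq_succ j with h | ⟨j', rfl⟩
    · rw [h, hB0]; exact hc
    · exact (hBstep i j').2.1
  refine ⟨fun s => (l:ℝ)⁻¹ * ∑ i, ds i s, ⟨fun j s => (l:ℝ)⁻¹ * ∑ i, B i j s, ?_, ?_, ?_⟩, ?_⟩
  · funext s
    simp only [hB0]
    rw [Finset.sum_const, Finset.card_univ, Fintype.card_fin, nsmul_eq_mul]
    field_simp
  · funext s
    simp only [hBlast]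
  · intro j
    have hIS : ∀ (f : Fin (k+1)), N.IsState (fun s => (l:ℝ)⁻¹ * ∑ i, B i f s) := by
      intro f s
      exact mul_nonneg hinv.le (Finset.sum_nonneg fun i _ => hBnn i f s)
    refine ⟨hIS _, hIS _, ?_⟩
    choose u hunn happ heq using fun i => (hBstep i j).2.2
    refine ⟨fun α => (l:ℝ)⁻¹ * ∑ i, u i α, ?_, ?_, ?_⟩
    · intro α; exact mul_nonneg hinv.le (Finset.sum_nonneg fun i _ => hunn i α)
    · intro α hα s hs
      have hsum : 0 < ∑ i, u i α := by
        by_contra h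
        push_neg at h
        exact absurd hα (by simp [mul_nonpos_iff, not_lt]; nlinarith)
      obtain ⟨i, -, hi⟩ := Finset.exists_lt_of_sum_lt
        (show ∑ _i : Fin l, (0:ℝ) < ∑ i, u i α by simpa using hsum)
      have hpos : 0 < B i j.castSucc s := happ i α hi s hs
      exact mul_pos hinv (Finset.sum_pos' (fun i' _ => hBnn i' j.castSucc s)
        ⟨i, Finset.mem_univ i, hpos⟩)
    · intro s
      simp only [heq, Finset.sum_add_distrib, mul_add, Finset.mul_sum, Finset.sum_mul]
      congr 1
      rw [Finset.sum_comm]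
      apply Finset.sum_congr rfl
      intro α _
      apply Finset.sum_congr rfl
      intro i _
      ring
  · ext s
    simp only [CRN.present, Set.mem_iUnion, Set.mem_setOf_eq]
    constructor
    · intro h
      have hsum : 0 < ∑ i, ds i s := by
        by_contra hn
        push_neg at hn
        nlinarith
      obtain ⟨i, -, hi⟩ := Finset.exists_lt_of_sum_lt
        (show ∑ _i : Fin l, (0:ℝ) < ∑ i, ds i s by simpa using hsum)
      exact ⟨i, hi⟩
    · rintro ⟨i, hi⟩
      exact mul_pos hinv (Finset.sum_pos' (fun i' _ => hds i' s) ⟨i, Finset.mem_univ i, hi⟩)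
end

section
/- For any CRN, let m be the minimum of |R| and |Λ| and let c be any state. Then there exists a state d such that c ⇝^m d and [d] = P(c), i.e., d is reachable from c in at most m straight-line segments and every species producible from c is present in d. -/
open Finset Filter Topology

namespace CRN

variable (N : CRN)

/-! ### Auxiliary development -/

/-- Reactions applicable when exactly the species of `Ω` are present. -/
def appSet (Ω : Set (Fin N.nS)) : Set (Fin N.nR) :=
  {α | ∀ s, 0 < N.react α s → s ∈ Ω}

/-- Species obtainable in one straight-line segment from a state with present set `Ω`. -/
def Fstep (Ω : Set (Fin N.nS)) : Set (Fin N.nS) :=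
  Ω ∪ {s | ∃ u : Fin N.nR → ℝ, (∀ α, 0 ≤ u α) ∧ (∀ α, 0 < u α → α ∈ N.appSet Ω) ∧
       (∀ t, t ∉ Ω → 0 ≤ ∑ α, u α * N.stoich t α) ∧ 0 < ∑ α, u α * N.stoich s α}

lemma subset_Fstep (Ω : Set (Fin N.nS)) : Ω ⊆ N.Fstep Ω := Set.subset_union_left

lemma appSet_mono {Ω Ω' : Set (Fin N.nS)} (h : Ω ⊆ Ω') : N.appSet Ω ⊆ N.appSet Ω' :=
  fun α hα s hs => h (hα s hs)

lemma Fstep_mono {Ω Ω' : Set (Fin N.nS)} (h : Ω ⊆ Ω') : N.Fstep Ω ⊆ N.Fstep Ω' := by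
  rintro s (hs | ⟨u, hu0, hap, hnn, hpos⟩)
  · exact Or.inl (h hs)
  · exact Or.inr ⟨u, hu0, fun α hα => N.appSet_mono h (hap α hα),
      fun t ht => hnn t (fun ht' => ht (h ht')), hpos⟩

/-- Small-ε lemma. -/
lemma exists_eps {n : ℕ} (P : Fin n → Prop) (d w : Fin n → ℝ) (hd : ∀ t, P t → 0 < d t) :
    ∃ ε : ℝ, 0 < ε ∧ ∀ t, P t → 0 < d t + ε * w t := by
  have h : ∀ᶠ ε : ℝ in 𝓝[>] 0, ∀ t, P t → 0 < d t + ε * w t := by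
    rw [Filter.eventually_all]
    intro t
    by_cases hP : P t
    · have ht : Tendsto (fun ε : ℝ => d t + ε * w t) (𝓝[>] 0) (𝓝 (d t)) := by
        have h2 : Tendsto (fun ε : ℝ => d t + ε * w t) (𝓝 0) (𝓝 (d t + 0 * w t)) :=
          tendsto_const_nhds.add (tendsto_id.mul tendsto_const_nhds)
        simpa using h2.mono_left nhdsWithin_le_nhds
      filter_upwards [ht.eventually (eventually_gt_nhds (hd t hP))] with ε hε _
      exact hε
    · filter_upwards with ε hh; exact absurd hh hP
  obtain ⟨ε, hε, hε0⟩ := (h.and self_mem_nhdsWithin).exists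
  exact ⟨ε, hε0, hε⟩

/-- A combined flux witnessing all new species of `Fstep Ω` at once. -/
lemma exists_combined_witness (Ω : Set (Fin N.nS)) :
    ∃ u : Fin N.nR → ℝ, (∀ α, 0 ≤ u α) ∧ (∀ α, 0 < u α → α ∈ N.appSet Ω) ∧
      (∀ t, t ∉ Ω → 0 ≤ ∑ α, u α * N.stoich t α) ∧
      (∀ t, t ∈ N.Fstep Ω \ Ω → 0 < ∑ α, u α * N.stoich t α) := by
  classical
  -- witness for each new species
  have hwit : ∀ s : Fin N.nS, ∃ v : Fin N.nR → ℝ,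
      (∀ α, 0 ≤ v α) ∧ (∀ α, 0 < v α → α ∈ N.appSet Ω) ∧
      (∀ t, t ∉ Ω → 0 ≤ ∑ α, v α * N.stoich t α) ∧
      (s ∈ N.Fstep Ω \ Ω → 0 < ∑ α, v α * N.stoich s α) := by
    intro s
    by_cases hs : s ∈ N.Fstep Ω \ Ω
    · obtain ⟨u, hu0, hap, hnn, hpos⟩ := hs.1.resolve_left hs.2
      exact ⟨u, hu0, hap, hnn, fun _ => hpos⟩
    · exact ⟨0, fun _ => le_rfl, fun α hα => absurd hα (lt_irrefl 0), by simp, fun h => absurd h hs⟩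
  choose v hv0 hvap hvnn hvpos using hwit
  refine ⟨fun α => ∑ s, v s α, ?_, ?_, ?_, ?_⟩
  · intro α; exact Finset.sum_nonneg fun s _ => hv0 s α
  · intro α hα
    obtain ⟨s, _, hs⟩ := Finset.exists_ne_zero_of_sum_ne_zero hα.ne'
    exact hvap s α (lt_of_le_of_ne (hv0 s α) (Ne.symm hs))
  · intro t ht
    have : ∑ α, (∑ s, v s α) * N.stoich t α = ∑ s, ∑ α, v s α * N.stoich t α := by
      rw [Finset.sum_comm]
      exact Finset.sum_congr rfl fun α _ => by rw [Finset.sum_mul]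
    rw [this]
    exact Finset.sum_nonneg fun s _ => hvnn s t ht
  · intro t ht
    have heq : ∑ α, (∑ s, v s α) * N.stoich t α = ∑ s, ∑ α, v s α * N.stoich t α := by
      rw [Finset.sum_comm]
      exact Finset.sum_congr rfl fun α _ => by rw [Finset.sum_mul]
    rw [heq]
    refine Finset.sum_pos' (fun s _ => hvnn s t ht.2) ⟨t, Finset.mem_univ t, hvpos t ht⟩

/-- One segment realizes `Fstep` exactly. -/
lemma step_realize {d : Fin N.nS → ℝ} {Ω : Set (Fin N.nS)}
    (hd : N.IsState d) (hpres : N.present d = Ω) :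
    ∃ e, N.slReach d e ∧ N.IsState e ∧ N.present e = N.Fstep Ω := by
  obtain ⟨u, hu0, hap, hnn, hpos⟩ := N.exists_combined_witness Ω
  set w : Fin N.nS → ℝ := fun t => ∑ α, u α * N.stoich t α with hw
  obtain ⟨ε, hε, hεw⟩ := exists_eps (fun t => t ∈ Ω) d w
    (fun t ht => by rw [← hpres] at ht; exact ht)
  have hdz : ∀ t, t ∉ Ω → d t = 0 := by
    intro t ht
    rw [← hpres] at ht
    exact le_antisymm (not_lt.mp ht) (hd t)
  set e : Fin N.nS → ℝ := fun t => d t + ε * w t with he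
  have hstate : N.IsState e := by
    intro t
    by_cases ht : t ∈ Ω
    · exact (hεw t ht).le
    · simp only [he, hdz t ht, zero_add]
      exact mul_nonneg hε.le (hnn t ht)
  have hpresE : N.present e = N.Fstep Ω := by
    ext t
    simp only [present, Set.mem_setOf_eq]
    constructor
    · intro hte
      by_cases ht : t ∈ Ω
      · exact N.subset_Fstep Ω ht
      · have hwt : 0 < w t := by
          have h1 : 0 < ε * w t := by
            have := hdz t ht
            simp only [he] at hte
            linarith
          nlinarith
        exact Or.inr ⟨u, hu0, hap, hnn, hwt⟩
    · intro ht
      by_cases htΩ : t ∈ Ω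
      · exact hεw t htΩ
      · have hwt : 0 < w t := hpos t ⟨ht, htΩ⟩
        simp only [he, hdz t htΩ, zero_add]
        exact mul_pos hε hwt
  refine ⟨e, ⟨hd, hstate, fun α => ε * u α, ?_, ?_, ?_⟩, hstate, hpresE⟩
  · intro α; exact mul_nonneg hε.le (hu0 α)
  · intro α hα s hs
    have hα' : 0 < ε * u α := hα
    have huα : 0 < u α := by
      rcases (hu0 α).lt_or_eq with h | h
      · exact h
      · rw [← h, mul_zero] at hα'; exact absurd hα' (lt_irrefl 0)
    have hsΩ : s ∈ Ω := hap α huα s hs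
    rw [← hpres] at hsΩ
    exact hsΩ
  · intro s
    simp only [he, hw, Finset.mul_sum]
    congr 1
    exact Finset.sum_congr rfl fun α _ => by ring

/-- One segment cannot reach beyond `Fstep`. -/
lemma step_bound {d e : Fin N.nS → ℝ} {Ω : Set (Fin N.nS)}
    (h : N.slReach d e) (hpres : N.present d ⊆ Ω) :
    N.present e ⊆ N.Fstep Ω := by
  obtain ⟨hd, he2, u, hu0, hap, hsum⟩ := h
  intro s hs
  by_cases hsΩ : s ∈ Ω
  · exact N.subset_Fstep Ω hsΩ
  · have hdz : ∀ t, t ∉ Ω → d t = 0 := fun t ht =>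
      le_antisymm (not_lt.mp (fun hlt => ht (hpres hlt))) (hd t)
    refine Or.inr ⟨u, hu0, ?_, ?_, ?_⟩
    · intro α hα t ht
      exact hpres (hap α hα t ht)
    · intro t ht
      have h1 := hsum t
      rw [hdz t ht] at h1
      have het : 0 ≤ e t := he2 t
      linarith
    · have h1 := hsum s
      rw [hdz s hsΩ, zero_add] at h1
      rw [← h1]
      exact hs

/-- If `Fstep` moves `Ω`, some reaction is applicable. -/
lemma appSet_nonempty {Ω : Set (Fin N.nS)} (h : N.Fstep Ω ≠ Ω) :
    (N.appSet Ω).Nonempty := by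
  have hsub : Ω ⊆ N.Fstep Ω := N.subset_Fstep Ω
  obtain ⟨s, hsF, hsΩ⟩ : ∃ s, s ∈ N.Fstep Ω ∧ s ∉ Ω := by
    by_contra hcon
    push_neg at hcon
    exact h (le_antisymm hcon hsub)
  obtain ⟨u, hu0, hap, _, hpos⟩ := hsF.resolve_left hsΩ
  obtain ⟨α, _, hα⟩ := Finset.exists_ne_zero_of_sum_ne_zero hpos.ne'
  have huα : 0 < u α := by
    rcases (hu0 α).lt_or_eq with hlt | heq
    · exact hlt
    · rw [← heq, zero_mul] at hα; exact absurd rfl hα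
  exact ⟨α, hap α huα⟩

/-- If the applicable set does not grow, `Fstep Ω` is a fixed point. -/
lemma fix_of_appSet_eq {Ω : Set (Fin N.nS)} (h : N.appSet Ω = N.appSet (N.Fstep Ω)) :
    N.Fstep (N.Fstep Ω) = N.Fstep Ω := by
  refine le_antisymm ?_ (N.subset_Fstep _)
  rintro s (hs | ⟨u, hu0, hap, hnn, hpos⟩)
  · exact hs
  · -- s obtainable from Fstep Ω; show already in Fstep Ω
    by_cases hsF : s ∈ N.Fstep Ω
    · exact hsF
    obtain ⟨v, hv0, hvap, hvnn, hvpos⟩ := N.exists_combined_witness Ω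
    set wv : Fin N.nS → ℝ := fun t => ∑ α, v α * N.stoich t α with hwv
    set wu : Fin N.nS → ℝ := fun t => ∑ α, u α * N.stoich t α with hwu
    obtain ⟨ε, hε, hεw⟩ := exists_eps (fun t => t ∈ N.Fstep Ω \ Ω) wv wu
      (fun t ht => hvpos t ht)
    have hsΩ : s ∉ Ω := fun hc => hsF (N.subset_Fstep Ω hc)
    refine absurd (Or.inr ⟨fun α => v α + ε * u α, ?_, ?_, ?_, ?_⟩ :
      s ∈ N.Fstep Ω) hsF
    · intro α; exact add_nonneg (hv0 α) (mul_nonneg hε.le (hu0 α))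
    · intro α hα
      have hα' : 0 < v α + ε * u α := hα
      rcases (hv0 α).lt_or_eq with hlt | heq
      · exact hvap α hlt
      · have huα : 0 < u α := by
          by_contra hle
          push_neg at hle
          have hz : u α = 0 := le_antisymm hle (hu0 α)
          rw [← heq, hz, mul_zero, add_zero] at hα'
          exact absurd hα' (lt_irrefl 0)
        have : α ∈ N.appSet (N.Fstep Ω) := hap α huα
        rw [← h] at this
        exact this
    · intro t ht
      have hsum : ∑ α, (v α + ε * u α) * N.stoich t α = wv t + ε * wu t := by
        simp only [hwv, hwu, Finset.mul_sum, ← Finset.sum_add_distrib]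
        exact Finset.sum_congr rfl fun α _ => by ring
      rw [hsum]
      by_cases htF : t ∈ N.Fstep Ω
      · exact (hεw t ⟨htF, ht⟩).le
      · have h1 : 0 ≤ wv t := hvnn t ht
        have h2 : 0 ≤ wu t := hnn t htF
        nlinarith
    · have hsum : ∑ α, (v α + ε * u α) * N.stoich s α = wv s + ε * wu s := by
        simp only [hwv, hwu, Finset.mul_sum, ← Finset.sum_add_distrib]
        exact Finset.sum_congr rfl fun α _ => by ring
      rw [hsum]
      have h1 : 0 ≤ wv s := hvnn s hsΩ
      have h2 : 0 < wu s := hpos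
      nlinarith

/-- Generic counting lemma for strictly increasing chains of sets. -/
lemma chain_ncard {X : Type*} [Finite X] (f : ℕ → Set X) (n : ℕ)
    (h : ∀ j < n, f j ⊂ f (j + 1)) : (f 0).ncard + n ≤ (f n).ncard := by
  induction n with
  | zero => simp
  | succ n ih =>
    have h1 : (f n).ncard < (f (n + 1)).ncard :=
      Set.ncard_lt_ncard (h n (Nat.lt_succ_self n)) (Set.toFinite _)
    have h2 := ih fun j hj => h j (Nat.lt_succ_of_lt hj)
    omega

/-- Realize `k` iterations of `Fstep` in `k` segments. -/
lemma exists_segReachN_iterate {c : Fin N.nS → ℝ} (hc : N.IsState c) (k : ℕ) :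
    ∃ d, N.segReachN k c d ∧ N.IsState d ∧
      N.present d = (N.Fstep)^[k] (N.present c) := by
  induction k with
  | zero =>
    refine ⟨c, ⟨fun _ => c, rfl, rfl, fun i => absurd i.2 (by omega)⟩, hc, by simp⟩
  | succ k ih =>
    obtain ⟨d, ⟨b, hb0, hbl, hbs⟩, hd, hpres⟩ := ih
    obtain ⟨e, hstep, he, hpresE⟩ := N.step_realize hd hpres
    refine ⟨e, ⟨Fin.snoc b e, ?_, ?_, ?_⟩, he, ?_⟩
    · have h0 := @Fin.snoc_castSucc (k + 1) (fun _ => Fin N.nS → ℝ) e b 0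
      simpa [hb0] using h0
    · exact Fin.snoc_last _ _
    · intro i
      induction i using Fin.lastCases with
      | last =>
        have h1 : (Fin.last k).castSucc = (Fin.last k).castSucc := rfl
        rw [Fin.succ_last]
        rw [Fin.snoc_castSucc, Fin.snoc_last, hbl]
        exact hstep
      | cast j =>
        rw [Fin.succ_castSucc, Fin.snoc_castSucc, Fin.snoc_castSucc]
        exact hbs j
    · rw [Function.iterate_succ_apply', ← hpresE]

/-- Whatever is reachable in `l` segments is inside `l` iterations of `Fstep`. -/
lemma segReachN_present_subset {c d : Fin N.nS → ℝ} {l : ℕ}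
    (h : N.segReachN l c d) : N.present d ⊆ (N.Fstep)^[l] (N.present c) := by
  obtain ⟨b, hb0, hbl, hbs⟩ := h
  have key : ∀ i : Fin (l + 1), N.present (b i) ⊆ (N.Fstep)^[(i : ℕ)] (N.present c) := by
    intro i
    induction i using Fin.induction with
    | zero => rw [hb0]; simp
    | succ j ihj =>
      have hstep := hbs j
      have h1 := N.step_bound hstep ihj
      rw [Fin.val_succ, Function.iterate_succ_apply']
      simpa using h1
  have := key (Fin.last l)
  rw [hbl] at this
  simpa using this

lemma subset_iterate_Fstep (t : ℕ) (Ω : Set (Fin N.nS)) : Ω ⊆ (N.Fstep)^[t] Ω := by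
  induction t with
  | zero => simp
  | succ t ih =>
    rw [Function.iterate_succ_apply']
    exact ih.trans (N.subset_Fstep _)

end CRN

/-- For any state `c` there is a state `d` with `c ⇝^m d` and `[d] = P(c)`,
where `m = min |R| |Λ|`: all producible species can be made present within
`m` straight-line segments. -/
theorem exists_segReachN_min_present_eq_producible
    (N : CRN) (c : Fin N.nS → ℝ) (hc : N.IsState c) :
    ∃ d : Fin N.nS → ℝ, N.segReachN (min N.nR N.nS) c d ∧
      N.present d = N.producible c := by
  classical
  set m := min N.nR N.nS with hm
  set Ω0 := N.present c with hΩ0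
  set Om : Set (Fin N.nS) := (N.Fstep)^[m] Ω0 with hOm
  -- `Om` is a fixed point of `Fstep`.
  have hfix : N.Fstep Om = Om := by
    by_contra hne
    have hstrict : ∀ j, j ≤ m → (N.Fstep)^[j] Ω0 ⊂ (N.Fstep)^[j + 1] Ω0 := by
      intro j hj
      rw [Function.iterate_succ_apply']
      rw [Set.ssubset_iff_subset_ne]
      refine ⟨N.subset_Fstep _, ?_⟩
      intro heq
      have hx : N.Fstep ((N.Fstep)^[j] Ω0) = (N.Fstep)^[j] Ω0 := heq.symm
      have hOmj : Om = (N.Fstep)^[j] Ω0 := by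
        rw [hOm, ← Nat.sub_add_cancel hj, Function.iterate_add_apply]
        exact Function.iterate_fixed hx (m - j)
      rw [hOmj] at hne
      exact hne hx
    rcases le_total N.nS N.nR with hcase | hcase
    · -- species counting
      have hmval : m = N.nS := min_eq_right hcase
      have hchain := CRN.chain_ncard (fun j => (N.Fstep)^[j] Ω0) (m + 1)
        (fun j hj => hstrict j (by omega))
      have hbound : ((N.Fstep)^[m + 1] Ω0).ncard ≤ N.nS := by
        have h1 := Set.ncard_le_ncard (Set.subset_univ ((N.Fstep)^[m + 1] Ω0))
          Set.finite_univ
        simpa [Set.ncard_univ] using h1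
      omega
    · -- reaction counting
      have hmval : m = N.nR := min_eq_left hcase
      set g : ℕ → Set (Fin N.nR) := fun j => N.appSet ((N.Fstep)^[j] Ω0) with hg
      have hgs : ∀ j < m, g j ⊂ g (j + 1) := by
        intro j hj
        rw [Set.ssubset_iff_subset_ne]
        refine ⟨N.appSet_mono (hstrict j (le_of_lt hj)).subset, ?_⟩
        intro heq
        have heq2 : N.appSet ((N.Fstep)^[j] Ω0) =
            N.appSet (N.Fstep ((N.Fstep)^[j] Ω0)) := by
          have h' : N.appSet ((N.Fstep)^[j] Ω0) = N.appSet ((N.Fstep)^[j + 1] Ω0) := heq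
          rwa [Function.iterate_succ_apply'] at h'
        have hfix2 := N.fix_of_appSet_eq heq2
        have hss := hstrict (j + 1) (by omega)
        rw [Function.iterate_succ_apply', Function.iterate_succ_apply',
          Function.iterate_succ_apply'] at hss
        rw [hfix2] at hss
        exact (lt_irrefl _ hss)
      have hg0 : 1 ≤ (g 0).ncard := by
        have hne0 : N.Fstep Ω0 ≠ Ω0 := by
          have hss : Ω0 ⊂ N.Fstep Ω0 := by simpa using hstrict 0 (Nat.zero_le m)
          exact fun hcon => hss.ne hcon.symm
        have hnonempty := N.appSet_nonempty hne0
        have : (g 0).Nonempty := by simpa [hg] using hnonempty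
        exact (Set.ncard_pos (Set.toFinite _)).mpr this
      have hchain := CRN.chain_ncard g m hgs
      have hbound : (g m).ncard ≤ N.nR := by
        have h1 := Set.ncard_le_ncard (Set.subset_univ (g m)) Set.finite_univ
        simpa [Set.ncard_univ] using h1
      omega
  -- assemble
  obtain ⟨d, hreach, hd, hpres⟩ := N.exists_segReachN_iterate hc m
  refine ⟨d, hreach, ?_⟩
  rw [hpres]
  ext s
  constructor
  · intro hs
    refine ⟨d, ⟨m, hreach⟩, ?_⟩
    show s ∈ N.present d
    rw [hpres]
    exact hs
  · rintro ⟨e, ⟨l, hl⟩, hes⟩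
    have h1 : s ∈ (N.Fstep)^[l] Ω0 := N.segReachN_present_subset hl hes
    rcases le_or_gt l m with hlm | hlm
    · have hsub : (N.Fstep)^[l] Ω0 ⊆ (N.Fstep)^[m] Ω0 := by
        rw [← Nat.sub_add_cancel hlm, Function.iterate_add_apply]
        exact N.subset_iterate_Fstep (m - l) _
      exact hsub h1
    · have heq : (N.Fstep)^[l] Ω0 = Om := by
        rw [← Nat.sub_add_cancel hlm.le, Function.iterate_add_apply, ← hOm]
        exact Function.iterate_fixed hfix (l - m)
      rw [heq] at h1
      exact h1
end

section
/- For any CRN, suppose c is a state such that every species producible from c is already present in c, i.e., [c] = P(c). Then every state d that is segment-reachable from c is straight-line reachable from c. -/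
open Finset Filter Topology

lemma CRN.segReachN_split (N : CRN) (l : ℕ) (c d : Fin N.nS → ℝ)
    (h : N.segReachN (l + 1) c d) :
    ∃ e, N.segReachN l c e ∧ N.slReach e d := by
  obtain ⟨b, hb0, hbl, hstep⟩ := h
  refine ⟨b (Fin.last l).castSucc, ⟨fun i => b i.castSucc, by simpa using hb0, rfl, ?_⟩, ?_⟩
  · intro i
    have := hstep i.castSucc
    rwa [Fin.succ_castSucc] at this
  · have := hstep (Fin.last l)
    simpa [hbl] using this

/-- If every species producible from `c` is already present in `c`
(`[c] = P(c)`), then every state segment-reachable from `c` is straight-line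
reachable from `c`. -/
theorem segReach_implies_slReach_of_present_eq_producible
    (N : CRN) (c : Fin N.nS → ℝ) (hc : N.IsState c)
    (hall : N.present c = N.producible c) :
    ∀ d : Fin N.nS → ℝ, N.segReach c d → N.slReach c d := by
  have key : ∀ l d, N.segReachN l c d → N.slReach c d := by
    intro l
    induction l with
    | zero =>
      intro d hd
      obtain ⟨b, hb0, hbl, _⟩ := hd
      have hdc : d = c := by rw [← hb0, ← hbl]; rfl
      subst hdc
      exact ⟨hc, hc, 0, fun α => le_refl 0, fun α h => absurd h (by simp),
        fun s => by simp⟩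
    | succ l ih =>
      intro d hd
      obtain ⟨e, hce, hed⟩ := N.segReachN_split l c d hd
      have hce' : N.slReach c e := ih e hce
      obtain ⟨_, hse, u, hu, hua, hus⟩ := hce'
      obtain ⟨_, hsd, v, hv, hva, hvs⟩ := hed
      refine ⟨hc, hsd, u + v, fun α => add_nonneg (hu α) (hv α), ?_, ?_⟩
      · intro α hα
        rcases lt_or_ge 0 (u α) with h | h
        · exact hua α h
        · have hvα : 0 < v α := by
            have : u α = 0 := le_antisymm h (hu α)
            simpa [Pi.add_apply, this] using hα
          intro s hs
          have hes : 0 < e s := hva α hvα s hs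
          have : s ∈ N.producible c := ⟨e, ⟨l, hce⟩, hes⟩
          rw [← hall] at this
          exact this
      · intro s
        have := hvs s
        rw [this, hus s]
        simp [Pi.add_apply, add_mul, Finset.sum_add_distrib]
        ring
  rintro d ⟨l, hd⟩
  exact key l d hd
end

section
/- For any CRN and any set of species Ω ⊆ Λ: Ω is a siphon if and only if for every state c with Ω ∩ [c] = ∅ and every state d with c ⇝ d, one has Ω ∩ [d] = ∅. That is, Ω is a siphon exactly when the absence of all species of Ω is forward-invariant under segment-reachability. -/
open Finset Filter Topology

private lemma siphon_step (N : CRN) (Ω : Set (Fin N.nS)) (hS : N.IsSiphon Ω)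
    {c d : Fin N.nS → ℝ} (h : N.slReach c d) (hc : Ω ∩ N.present c = ∅) :
    Ω ∩ N.present d = ∅ := by
  have hc' : ∀ s ∈ Ω, c s = 0 := by
    intro s hs
    have hnot : s ∉ N.present c := fun hp => Set.eq_empty_iff_forall_notMem.mp hc s ⟨hs, hp⟩
    have : ¬ 0 < c s := hnot
    exact le_antisymm (not_lt.mp this) (h.1 s)
  obtain ⟨hcs, hds, u, hu0, happ, heq⟩ := h
  apply Set.eq_empty_iff_forall_notMem.mpr
  rintro s ⟨hsΩ, hsp⟩
  have hds0 : d s = 0 := by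
    rw [heq s, hc' s hsΩ, zero_add]
    apply Finset.sum_eq_zero
    intro α _
    rcases eq_or_lt_of_le (hu0 α) with h0 | hpos
    · rw [← h0, zero_mul]
    · have hreact : ∀ t ∈ Ω, N.react α t = 0 := by
        intro t ht
        by_contra hne
        have : 0 < N.react α t := Nat.pos_of_ne_zero hne
        have := happ α hpos t this
        rw [hc' t ht] at this; exact lt_irrefl _ this
      have hprods : N.prods α s = 0 := by
        by_contra hne
        obtain ⟨t, ht, htp⟩ := hS α ⟨s, hsΩ, Nat.pos_of_ne_zero hne⟩
        rw [hreact t ht] at htp; exact lt_irrefl _ htp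
      have : N.stoich s α = 0 := by
        unfold CRN.stoich; rw [hprods, hreact s hsΩ]; simp
      rw [this, mul_zero]
  have hlt : 0 < d s := hsp
  rw [hds0] at hlt; exact lt_irrefl _ hlt

/-- `Ω` is a siphon if and only if the absence of all species of `Ω` is
forward-invariant under segment-reachability. -/
theorem isSiphon_iff_forward_invariant
    (N : CRN) (Ω : Set (Fin N.nS)) :
    N.IsSiphon Ω ↔
      ∀ c : Fin N.nS → ℝ, N.IsState c → Ω ∩ N.present c = ∅ →
        ∀ d : Fin N.nS → ℝ, N.segReach c d → Ω ∩ N.present d = ∅ := by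
  constructor
  · intro hS c _ hc d ⟨l, hseg⟩
    induction l generalizing c with
    | zero =>
      obtain ⟨b, hb0, hbl, _⟩ := hseg
      have : c = d := by rw [← hb0, ← hbl]; rfl
      rwa [← this]
    | succ l ih =>
      obtain ⟨b, hb0, hbl, hstep⟩ := hseg
      have h1 : N.slReach c (b 1) := by
        have := hstep 0
        simpa [hb0] using this
      have hc1 : Ω ∩ N.present (b 1) = ∅ := siphon_step N Ω hS h1 hc
      apply ih (b 1) h1.2.1 hc1
      refine ⟨fun i => b i.succ, rfl, ?_, ?_⟩
      · rw [← hbl]; congr 1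
      · intro i
        have := hstep i.succ
        have hcs : (i.succ : Fin (l+1)).castSucc = (i.castSucc).succ := by
          simp [Fin.ext_iff]
        rw [hcs] at this
        exact this
  · intro hinv α ⟨s₀, hs₀Ω, hs₀p⟩
    by_contra hno
    push_neg at hno
    -- build initial state
    classical
    set c : Fin N.nS → ℝ := fun s => if s ∈ Ω then 0 else 1 with hcdef
    have hcstate : N.IsState c := by
      intro s; simp only [hcdef]; split <;> norm_num
    have hcempty : Ω ∩ N.present c = ∅ := by
      apply Set.eq_empty_iff_forall_notMem.mpr
      rintro s ⟨hsΩ, hsp⟩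
      have hsp' : 0 < c s := hsp
      have : c s = 0 := by simp [hcdef, hsΩ]
      rw [this] at hsp'; exact lt_irrefl _ hsp'
    have hreactΩ : ∀ s ∈ Ω, N.react α s = 0 := by
      intro s hs
      exact Nat.le_zero.mp (hno s hs)
    -- choose small epsilon
    set M : ℝ := ∑ s, (N.react α s : ℝ) with hM
    have hM0 : 0 ≤ M := Finset.sum_nonneg fun s _ => Nat.cast_nonneg _
    set ε : ℝ := 1 / (M + 1) with hε
    have hε0 : 0 < ε := by positivity
    have hεbound : ∀ s, ε * (N.react α s : ℝ) ≤ 1 := by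
      intro s
      have h1 : (N.react α s : ℝ) ≤ M + 1 := by
        have : (N.react α s : ℝ) ≤ M :=
          Finset.single_le_sum (f := fun t => (N.react α t : ℝ))
            (fun t _ => Nat.cast_nonneg _) (Finset.mem_univ s)
        linarith
      rw [hε, div_mul_eq_mul_div, one_mul, div_le_one (by linarith)]
      exact h1
    set d : Fin N.nS → ℝ := fun s => c s + ε * N.stoich s α with hddef
    have hdstate : N.IsState d := by
      intro s
      by_cases hs : s ∈ Ω
      · have : N.stoich s α = (N.prods α s : ℝ) := by
          unfold CRN.stoich; rw [hreactΩ s hs]; simp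
        simp only [hddef, this, hcdef, if_pos hs, zero_add]
        positivity
      · have hc1 : c s = 1 := by simp [hcdef, hs]
        have : N.stoich s α ≥ -(N.react α s : ℝ) := by
          unfold CRN.stoich
          have : (0:ℝ) ≤ (N.prods α s : ℝ) := Nat.cast_nonneg _
          linarith
        have h2 : ε * N.stoich s α ≥ -(ε * (N.react α s : ℝ)) := by nlinarith
        have h3 := hεbound s
        simp only [hddef, hc1]
        linarith
    have hstep0 : N.slReach c d := by
      refine ⟨hcstate, hdstate, fun β => if β = α then ε else 0, ?_, ?_, ?_⟩
      · intro β; dsimp only; split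
        · exact le_of_lt hε0
        · exact le_refl 0
      · intro β hβ
        have hβα : β = α := by by_contra h; simp [h] at hβ
        subst hβα
        intro s hs
        have hsΩ : s ∉ Ω := fun hmem => by
          rw [hreactΩ s hmem] at hs; exact lt_irrefl _ hs
        simp [hcdef, hsΩ]
      · intro s
        show c s + ε * N.stoich s α = c s + ∑ β, (if β = α then ε else 0) * N.stoich s β
        congr 1
        rw [Finset.sum_eq_single α]
        · simp
        · intro β _ hβ; simp [hβ]
        · intro h; exact absurd (Finset.mem_univ α) h
    have hreach : N.segReach c d := by
      refine ⟨1, ![c, d], rfl, ?_, ?_⟩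
      · show (![c, d] : Fin 2 → _) 1 = d; simp
      · intro i
        have hi : i = 0 := Subsingleton.elim _ _
        subst hi
        have h1 : (![c, d] : Fin 2 → _) (Fin.castSucc 0) = c := rfl
        have h2 : (![c, d] : Fin 2 → _) (Fin.succ 0) = d := by
          have : Fin.succ (0 : Fin 1) = 1 := rfl
          rw [this]; simp
        rw [h1, h2]
        exact hstep0
    have := hinv c hcstate hcempty d hreach
    have hd0 : d s₀ = 0 := by
      have hnot : s₀ ∉ N.present d := fun hp =>
        Set.eq_empty_iff_forall_notMem.mp this s₀ ⟨hs₀Ω, hp⟩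
      exact le_antisymm (not_lt.mp hnot) (hdstate s₀)
    have : N.stoich s₀ α = (N.prods α s₀ : ℝ) := by
      unfold CRN.stoich; rw [hreactΩ s₀ hs₀Ω]; simp
    have hdpos : 0 < d s₀ := by
      simp only [hddef, this, hcdef, if_pos hs₀Ω, zero_add]
      have : (0:ℝ) < (N.prods α s₀ : ℝ) := by exact_mod_cast hs₀p
      positivity
    rw [hd0] at hdpos; exact lt_irrefl _ hdpos
end

section
/- For any CRN and any state c, the set Ω = Λ ∖ P(c) of species that are not producible from c is a siphon. -/
open Finset Filter Topology

namespace CRN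

variable (N : CRN)

lemma segReach_refl' (c : Fin N.nS → ℝ) : N.segReach c c :=
  ⟨0, fun _ => c, rfl, rfl, fun i => i.elim0⟩

lemma isState_of_segReach {c d : Fin N.nS → ℝ} (h : N.segReach c d) (hc : N.IsState c) :
    N.IsState d := by
  obtain ⟨l, b, hb0, hbl, hstep⟩ := h
  cases l with
  | zero =>
    rw [← hbl, show Fin.last 0 = 0 from rfl, hb0]; exact hc
  | succ l =>
    have h := hstep (Fin.last l)
    rw [Fin.succ_last] at h
    rw [← hbl]; exact h.2.1

lemma segReach_snoc {c d e : Fin N.nS → ℝ} (h : N.segReach c d) (hde : N.slReach d e) :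
    N.segReach c e := by
  obtain ⟨l, b, hb0, hbl, hstep⟩ := h
  refine ⟨l + 1, Fin.snoc b e, ?_, ?_, ?_⟩
  · rw [show (0 : Fin (l + 2)) = Fin.castSucc 0 from rfl, Fin.snoc_castSucc, hb0]
  · rw [Fin.snoc_last]
  · intro i
    refine Fin.lastCases ?_ ?_ i
    · rw [Fin.succ_last, Fin.snoc_last, Fin.snoc_castSucc, hbl]; exact hde
    · intro j
      rw [Fin.succ_castSucc, Fin.snoc_castSucc, Fin.snoc_castSucc]
      exact hstep j

lemma slReach_avg {x y z : Fin N.nS → ℝ} (h : N.slReach x y) (hz : N.IsState z) :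
    N.slReach (fun s => (x s + z s) / 2) (fun s => (y s + z s) / 2) := by
  obtain ⟨hx, hy, u, hu0, happ, heq⟩ := h
  refine ⟨fun s => by have := hx s; have := hz s; positivity,
    fun s => by have := hy s; have := hz s; positivity,
    fun α => u α / 2, fun α => by have := hu0 α; positivity, ?_, ?_⟩
  · intro α hα s hs
    have h1 : 0 < x s := happ α (by linarith) s hs
    have h2 : 0 ≤ z s := hz s
    positivity
  · intro s
    have h1 : ∑ α, u α / 2 * N.stoich s α = (∑ α, u α * N.stoich s α) / 2 := by
      rw [Finset.sum_div]; exact Finset.sum_congr rfl fun α _ => by ring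
    show (y s + z s) / 2 = (x s + z s) / 2 + ∑ α, u α / 2 * N.stoich s α
    rw [heq s, h1]; ring

lemma segReach_avg {x y z : Fin N.nS → ℝ} (h : N.segReach x y) (hz : N.IsState z) :
    N.segReach (fun s => (x s + z s) / 2) (fun s => (y s + z s) / 2) := by
  obtain ⟨l, b, hb0, hbl, hstep⟩ := h
  exact ⟨l, fun i s => (b i s + z s) / 2,
    by funext s; show (b 0 s + z s) / 2 = _; rw [hb0],
    by funext s; show (b (Fin.last l) s + z s) / 2 = _; rw [hbl],
    fun i => N.slReach_avg (hstep i) hz⟩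

lemma segReach_trans {c d e : Fin N.nS → ℝ} (h1 : N.segReach c d) (h2 : N.segReach d e) :
    N.segReach c e := by
  obtain ⟨l, h2⟩ := h2
  induction l generalizing e with
  | zero =>
    obtain ⟨b, hb0, hbl, _⟩ := h2
    rwa [← hbl, show Fin.last 0 = 0 from rfl, hb0]
  | succ l ih =>
    obtain ⟨b, hb0, hbl, hstep⟩ := h2
    have hmid : N.segReachN l d (b (Fin.castSucc (Fin.last l))) := by
      refine ⟨fun i => b (Fin.castSucc i), by simpa using hb0, rfl, fun i => ?_⟩
      have h := hstep i.castSucc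
      rwa [Fin.succ_castSucc] at h
    have hlast := hstep (Fin.last l)
    rw [Fin.succ_last, hbl] at hlast
    exact N.segReach_snoc (ih hmid) hlast

lemma segReach_avg2 {c d1 d2 : Fin N.nS → ℝ} (hc : N.IsState c)
    (h1 : N.segReach c d1) (h2 : N.segReach c d2) :
    N.segReach c (fun s => (d1 s + d2 s) / 2) := by
  have hd1 : N.IsState d1 := N.isState_of_segReach h1 hc
  have A : N.segReach (fun s => (c s + c s) / 2) (fun s => (d1 s + c s) / 2) :=
    N.segReach_avg h1 hc
  have B : N.segReach (fun s => (c s + d1 s) / 2) (fun s => (d2 s + d1 s) / 2) :=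
    N.segReach_avg h2 hd1
  have e1 : (fun s => (c s + c s) / 2) = c := by funext s; ring
  have e2 : (fun s => (d1 s + c s) / 2) = (fun s => (c s + d1 s) / 2) := by funext s; ring
  have e3 : (fun s => (d2 s + d1 s) / 2) = (fun s => (d1 s + d2 s) / 2) := by funext s; ring
  rw [e1, e2] at A
  rw [e3] at B
  exact N.segReach_trans A B

lemma exists_reach_pos {c : Fin N.nS → ℝ} (hc : N.IsState c) (T : Finset (Fin N.nS))
    (hT : ∀ s ∈ T, s ∈ N.producible c) :
    ∃ d, N.segReach c d ∧ N.IsState d ∧ ∀ s ∈ T, 0 < d s := by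
  classical
  induction T using Finset.induction with
  | empty => exact ⟨c, N.segReach_refl' c, hc, by simp⟩
  | @insert s T hs ih =>
    obtain ⟨d, hd, hdS, hdpos⟩ := ih fun t ht => hT t (Finset.mem_insert_of_mem ht)
    obtain ⟨d', hd', hd's⟩ := hT s (Finset.mem_insert_self s T)
    have hd'S : N.IsState d' := N.isState_of_segReach hd' hc
    refine ⟨fun t => (d t + d' t) / 2, N.segReach_avg2 hc hd hd', ?_, ?_⟩
    · intro t; have := hdS t; have := hd'S t; positivity
    · intro t ht
      rcases Finset.mem_insert.mp ht with rfl | ht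
      · have := hdS t; linarith
      · have := hdpos t ht; have := hd'S t; linarith

end CRN

/-- For any state `c`, the set `Ω = Λ ∖ P(c)` of species not producible from
`c` is a siphon. -/
theorem isSiphon_compl_producible
    (N : CRN) (c : Fin N.nS → ℝ) (hc : N.IsState c) :
    N.IsSiphon (Set.univ \ N.producible c) := by
  classical
  rintro α ⟨s0, hs0Ω, hs0p⟩
  by_contra hno
  push_neg at hno
  -- every reactant of α is producible
  have hall : ∀ s, 0 < N.react α s → s ∈ N.producible c := by
    intro s hs
    by_contra h
    exact absurd hs (hno s ⟨Set.mem_univ s, h⟩).not_gt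
  -- reach a state d where every reactant of α is present
  set T : Finset (Fin N.nS) := Finset.univ.filter (fun s => 0 < N.react α s) with hTdef
  obtain ⟨d, hd, hdS, hdpos⟩ := N.exists_reach_pos hc T
    (fun s hsT => hall s (Finset.mem_filter.mp hsT).2)
  have hdapp : N.applicable d α := fun s hs =>
    hdpos s (Finset.mem_filter.mpr ⟨Finset.mem_univ s, hs⟩)
  -- T is nonempty since react α ≠ 0
  have hTne : T.Nonempty := by
    obtain ⟨s, hs⟩ := Function.ne_iff.mp (N.react_ne_zero α)
    exact ⟨s, Finset.mem_filter.mpr ⟨Finset.mem_univ s, Nat.pos_of_ne_zero hs⟩⟩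
  -- choose a small flux ε
  set ε : ℝ := T.inf' hTne (fun s => d s / N.react α s) with hεdef
  have hεpos : 0 < ε := by
    rw [hεdef, Finset.lt_inf'_iff]
    intro s hsT
    have h1 : 0 < d s := hdpos s hsT
    have h2 : 0 < (N.react α s : ℝ) := by
      exact_mod_cast (Finset.mem_filter.mp hsT).2
    positivity
  have hεle : ∀ s, 0 < N.react α s → ε * N.react α s ≤ d s := by
    intro s hs
    have hsT : s ∈ T := Finset.mem_filter.mpr ⟨Finset.mem_univ s, hs⟩
    have h2 : 0 < (N.react α s : ℝ) := by exact_mod_cast hs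
    have := Finset.inf'_le (fun s => d s / N.react α s) hsT
    rw [← hεdef] at this
    calc ε * N.react α s ≤ d s / N.react α s * N.react α s :=
          mul_le_mul_of_nonneg_right this h2.le
      _ = d s := div_mul_cancel₀ _ h2.ne'
  -- apply reaction α with flux ε
  set d' : Fin N.nS → ℝ := fun s => d s + ε * N.stoich s α with hd'def
  have hd'state : N.IsState d' := by
    intro s
    rcases Nat.eq_zero_or_pos (N.react α s) with h0 | hpos
    · have : N.stoich s α = N.prods α s := by rw [CRN.stoich, h0]; simp
      rw [hd'def]
      have hds := hdS s
      have : (0:ℝ) ≤ ε * N.stoich s α := by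
        rw [this]; positivity
      simpa using add_nonneg hds this
    · have h1 := hεle s hpos
      have h2 : ε * N.stoich s α = ε * N.prods α s - ε * N.react α s := by
        rw [CRN.stoich]; ring
      have h3 : (0:ℝ) ≤ ε * N.prods α s := by positivity
      rw [hd'def]
      simp only []
      linarith
  have hstep : N.slReach d d' := by
    refine ⟨hdS, hd'state, fun β => if β = α then ε else 0, ?_, ?_, ?_⟩
    · intro β; dsimp only; split <;> simp [hεpos.le]
    · intro β hβ
      by_cases h : β = α
      · subst h; exact hdapp
      · simp [h] at hβ
    · intro s
      rw [hd'def]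
      simp [ite_mul, Finset.sum_ite_eq']
  -- s0 is not a reactant of α (else it would be producible)
  have hs0r : N.react α s0 = 0 := by
    by_contra h
    exact hs0Ω.2 (hall s0 (Nat.pos_of_ne_zero h))
  have hs0' : 0 < d' s0 := by
    have h1 : N.stoich s0 α = N.prods α s0 := by rw [CRN.stoich, hs0r]; simp
    have h2 : (0:ℝ) < N.prods α s0 := by exact_mod_cast hs0p
    have h3 := hdS s0
    rw [hd'def]
    simp only [h1]
    nlinarith
  exact hs0Ω.2 ⟨d', N.segReach_snoc hd hstep, hs0'⟩
end

section
/- For any CRN, if c is a state and Ω' is a set of species such that every state d segment-reachable from c satisfies d(S) = 0 for all S ∈ Ω', then there exists a siphon Ω ⊇ Ω' such that c(S) = 0 for all S ∈ Ω. -/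
open Finset Filter Topology

namespace CRNaux

variable (N : CRN)

theorem segReach_refl (c : Fin N.nS → ℝ) : N.segReach c c :=
  ⟨0, fun _ => c, rfl, rfl, fun i => i.elim0⟩

theorem segReach_iff (c d : Fin N.nS → ℝ) :
    N.segReach c d ↔ Relation.ReflTransGen N.slReach c d := by
  constructor
  · rintro ⟨l, b, hb0, hbl, hstep⟩
    subst hb0; subst hbl
    have : ∀ j : Fin (l + 1), Relation.ReflTransGen N.slReach (b 0) (b j) := by
      intro j
      induction j using Fin.induction with
      | zero => exact Relation.ReflTransGen.refl
      | succ i ih => exact ih.tail (hstep i)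
    exact this (Fin.last l)
  · intro hr
    induction hr using Relation.ReflTransGen.head_induction_on with
    | refl => exact segReach_refl N d
    | head hstep _ ih =>
      obtain ⟨l, b, hb0, hbl, hsteps⟩ := ih
      refine ⟨l + 1, Fin.cons _ b, Fin.cons_zero _ _, ?_, ?_⟩
      · rw [show (Fin.last (l + 1)) = (Fin.last l).succ from rfl, Fin.cons_succ]
        exact hbl
      · intro i
        induction i using Fin.cases with
        | zero =>
          rw [show ((0 : Fin (l + 1)).castSucc) = (0 : Fin (l + 2)) from rfl,
            Fin.cons_zero, Fin.cons_succ, hb0]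
          exact hstep
        | succ j =>
          have h1 : (j.succ).castSucc = (j.castSucc).succ := (Fin.succ_castSucc j).symm
          rw [h1, Fin.cons_succ, Fin.cons_succ]
          exact hsteps j

theorem isState_of_reach {c d : Fin N.nS → ℝ} (hc : N.IsState c)
    (hr : Relation.ReflTransGen N.slReach c d) : N.IsState d := by
  induction hr with
  | refl => exact hc
  | tail _ hstep _ => exact hstep.2.1

noncomputable def avg (x y : Fin N.nS → ℝ) : Fin N.nS → ℝ := fun s => (x s + y s) / 2

theorem slReach_avg {c d c' d' : Fin N.nS → ℝ} (h1 : N.slReach c d) (h2 : N.slReach c' d') :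
    N.slReach (avg N c c') (avg N d d') := by
  obtain ⟨hsc, hsd, u, hu0, happ, hsum⟩ := h1
  obtain ⟨hsc', hsd', u', hu0', happ', hsum'⟩ := h2
  refine ⟨fun s => by have := hsc s; have := hsc' s; unfold avg; positivity,
    fun s => by have := hsd s; have := hsd' s; unfold avg; positivity,
    fun α => (u α + u' α) / 2, fun α => by have := hu0 α; have := hu0' α; positivity,
    ?_, ?_⟩
  · intro α hα s hs
    have hor : 0 < u α ∨ 0 < u' α := by
      by_contra hcon
      push_neg at hcon
      have h1 := le_antisymm hcon.1 (hu0 α)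
      have h2 := le_antisymm hcon.2 (hu0' α)
      have hα' : (0 : ℝ) < (u α + u' α) / 2 := hα
      rw [h1, h2] at hα'
      norm_num at hα'
    have : 0 < c s + c' s := by
      rcases hor with hu | hu
      · have := happ α hu s hs; have := hsc' s; linarith
      · have := happ' α hu s hs; have := hsc s; linarith
    unfold avg; linarith
  · intro s
    have e1 := hsum s
    have e2 := hsum' s
    have e3 : ∑ α, (u α + u' α) / 2 * N.stoich s α
        = (∑ α, u α * N.stoich s α + ∑ α, u' α * N.stoich s α) / 2 := by
      rw [← Finset.sum_add_distrib, Finset.sum_div]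
      exact Finset.sum_congr rfl fun α _ => by ring
    unfold avg
    rw [e3, e1, e2]; ring

theorem slReach_self {c : Fin N.nS → ℝ} (hc : N.IsState c) : N.slReach c c :=
  ⟨hc, hc, 0, fun _ => le_refl 0, fun α hα => absurd hα (lt_irrefl 0),
    fun s => by simp⟩

theorem reach_avg {c d d' : Fin N.nS → ℝ} (hc : N.IsState c)
    (h1 : Relation.ReflTransGen N.slReach c d) (h2 : Relation.ReflTransGen N.slReach c d') :
    Relation.ReflTransGen N.slReach c (avg N d d') := by
  have hd : N.IsState d := isState_of_reach N hc h1
  -- c = avg c c ⇝ avg d c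
  have step1 : Relation.ReflTransGen N.slReach (avg N c c) (avg N d c) :=
    Relation.ReflTransGen.lift (fun x => avg N x c)
      (fun a b hab => slReach_avg N hab (slReach_self N hc)) _ _ h1
  have step2 : Relation.ReflTransGen N.slReach (avg N c d) (avg N d' d) :=
    Relation.ReflTransGen.lift (fun x => avg N x d)
      (fun a b hab => slReach_avg N hab (slReach_self N hd)) _ _ h2
  have hcc : avg N c c = c := by funext s; unfold avg; ring
  have hcomm : avg N d c = avg N c d := by funext s; unfold avg; ring
  have hcomm' : avg N d' d = avg N d d' := by funext s; unfold avg; ring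
  rw [hcc, hcomm] at step1
  rw [hcomm'] at step2
  exact step1.trans step2

end CRNaux

theorem exists_reach_pos (N : CRN) (c : Fin N.nS → ℝ) (hc : N.IsState c)
    (T : Finset (Fin N.nS)) (hT : ∀ s ∈ T, s ∈ N.producible c) :
    ∃ d, Relation.ReflTransGen N.slReach c d ∧ ∀ s ∈ T, 0 < d s := by
  classical
  induction T using Finset.induction with
  | empty => exact ⟨c, Relation.ReflTransGen.refl, by simp⟩
  | @insert a T ha ih =>
    obtain ⟨d, hrd, hdpos⟩ := ih fun s hs => hT s (Finset.mem_insert_of_mem hs)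
    obtain ⟨da, hrda, hda⟩ := hT a (Finset.mem_insert_self a T)
    rw [CRNaux.segReach_iff] at hrda
    have hsd : N.IsState d := CRNaux.isState_of_reach N hc hrd
    have hsda : N.IsState da := CRNaux.isState_of_reach N hc hrda
    refine ⟨CRNaux.avg N da d, CRNaux.reach_avg N hc hrda hrd, ?_⟩
    intro s hs
    rcases Finset.mem_insert.mp hs with rfl | hs
    · have := hsd s; unfold CRNaux.avg; positivity
    · have h1 := hdpos s hs; have h2 := hsda s; unfold CRNaux.avg; positivity

/-- If every state segment-reachable from `c` is zero on all species of `Ω'`,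
then there is a siphon `Ω ⊇ Ω'` on which `c` is zero. -/
theorem exists_siphon_superset_of_never_producible
    (N : CRN) (c : Fin N.nS → ℝ) (hc : N.IsState c)
    (Ω' : Set (Fin N.nS))
    (h : ∀ d : Fin N.nS → ℝ, N.segReach c d → ∀ s ∈ Ω', d s = 0) :
    ∃ Ω : Set (Fin N.nS), N.IsSiphon Ω ∧ Ω' ⊆ Ω ∧ ∀ s ∈ Ω, c s = 0 := by
  classical
  refine ⟨{s | s ∉ N.producible c}, ?_, ?_, ?_⟩
  · -- siphon
    rintro α ⟨s₀, hs₀Ω, hs₀p⟩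
    by_contra hcon
    push_neg at hcon
    -- every reactant of α is producible
    have hreact : ∀ s, 0 < N.react α s → s ∈ N.producible c := by
      intro s hs
      by_contra hns
      have := hcon s hns
      omega
    set T : Finset (Fin N.nS) := Finset.univ.filter (fun s => 0 < N.react α s) with hTdef
    obtain ⟨d, hrd, hdpos⟩ := exists_reach_pos N c hc T
      (fun s hs => hreact s (Finset.mem_filter.mp hs).2)
    have hsd : N.IsState d := CRNaux.isState_of_reach N hc hrd
    have happd : N.applicable d α := fun s hs =>
      hdpos s (Finset.mem_filter.mpr ⟨Finset.mem_univ s, hs⟩)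
    -- s₀ not producible ⇒ d s₀ = 0
    have hds₀ : d s₀ = 0 := by
      by_contra hne
      have hpos : 0 < d s₀ := lt_of_le_of_ne (hsd s₀) (Ne.symm hne)
      exact hs₀Ω ⟨d, (CRNaux.segReach_iff N c d).mpr hrd, hpos⟩
    have hrs₀ : N.react α s₀ = 0 := by
      by_contra hne
      have := hdpos s₀ (Finset.mem_filter.mpr ⟨Finset.mem_univ s₀, Nat.pos_of_ne_zero hne⟩)
      linarith
    -- choose ε
    have hne : (Finset.univ : Finset (Fin N.nS)).Nonempty := ⟨s₀, Finset.mem_univ s₀⟩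
    set f : Fin N.nS → ℝ := fun s => if N.stoich s α < 0 then d s / (-N.stoich s α) else 1
      with hfdef
    set ε : ℝ := Finset.univ.inf' hne f with hεdef
    have hdpos' : ∀ s, N.stoich s α < 0 → 0 < d s := by
      intro s hst
      apply happd s
      have : (N.prods α s : ℝ) < (N.react α s : ℝ) := by
        unfold CRN.stoich at hst; linarith
      have : (0 : ℝ) < (N.react α s : ℝ) := lt_of_le_of_lt (Nat.cast_nonneg _) this
      exact_mod_cast this
    have hεpos : 0 < ε := by
      rw [hεdef, Finset.lt_inf'_iff]
      intro s _
      rw [hfdef]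
      by_cases hst : N.stoich s α < 0
      · simp only [hst, if_true]
        have h1 := hdpos' s hst
        exact div_pos h1 (by linarith)
      · simp only [hst, if_false]; norm_num
    have hεle : ∀ s, ε ≤ f s := fun s => Finset.inf'_le f (Finset.mem_univ s)
    set d' : Fin N.nS → ℝ := fun s => d s + ε * N.stoich s α with hd'def
    have hsd' : N.IsState d' := by
      intro s
      rw [hd'def]
      by_cases hst : N.stoich s α < 0
      · have h1 := hεle s
        rw [hfdef] at h1
        simp only [hst, if_true] at h1
        have h2 : 0 < -N.stoich s α := by linarith
        rw [le_div_iff₀ h2] at h1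
        simp only
        nlinarith
      · push_neg at hst
        have := hsd s
        have := mul_nonneg hεpos.le hst
        simp only
        linarith
    have hstep : N.slReach d d' := by
      refine ⟨hsd, hsd', fun β => if β = α then ε else 0, ?_, ?_, ?_⟩
      · intro β; by_cases hβ : β = α <;> simp [hβ, hεpos.le]
      · intro β hβ
        by_cases hβα : β = α
        · subst hβα; exact happd
        · simp [hβα] at hβ
      · intro s
        rw [hd'def]
        simp only
        congr 1
        symm
        simp [ite_mul, Finset.sum_ite_eq']
    have hrd' : Relation.ReflTransGen N.slReach c d' := hrd.tail hstep
    have : 0 < d' s₀ := by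
      rw [hd'def]
      simp only
      rw [hds₀]
      unfold CRN.stoich
      rw [hrs₀]
      have : (0 : ℝ) < (N.prods α s₀ : ℝ) := by exact_mod_cast hs₀p
      simp only [Nat.cast_zero, sub_zero, zero_add]
      positivity
    exact hs₀Ω ⟨d', (CRNaux.segReach_iff N c d').mpr hrd', this⟩
  · -- Ω' ⊆ Ω
    intro s hs hp
    obtain ⟨d, hrd, hds⟩ := hp
    have := h d hrd s hs
    linarith
  · -- c zero on Ω
    intro s hs
    by_contra hne
    have hpos : 0 < c s := lt_of_le_of_ne (hc s) (Ne.symm hne)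
    exact hs ⟨c, CRNaux.segReach_refl N c, hpos⟩
end
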